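/- arXiv:2108.05742 — 4 statements merged into one kernel-verified Lean document; each statement's English description precedes it below -/
import Mathlib

section
/- Let q be a prime power and let X1 ∈ F_q^{r×s}, X2 ∈ F_q^{s×l}, X3 ∈ F_q^{r×l} be matrices with X1·X2 ≠ X3. If ν is drawn uniformly at random from F_q^l, then the probability that X1·(X2·ν) = X3·ν is at most 1/q. (Consequently Freivalds' algorithm returns False with probability at least 1 − 1/q on an incorrect multiplication, and always returns True when X1·X2 = X3.) -/
/-! The vectors that fool the check are exactly the kernel of `X1 * X2 - X3`, a nonzero matrix,
so they form a proper subspace of `F_q^l`; such a subspace has dimension `< l`, hence at most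
`q ^ (l - 1)` elements. -/

theorem Submodule.natCard_mul_natCard_le_of_ne_top {K V : Type*} [Field K] [Finite K]
    [AddCommGroup V] [Module K V] [Module.Finite K V] {p : Submodule K V} (hp : p ≠ ⊤) :
    Nat.card p * Nat.card K ≤ Nat.card V := by
  rw [Module.natCard_eq_pow_finrank (K := K), Module.natCard_eq_pow_finrank (K := K) (V := V),
    ← pow_succ]
  exact Nat.pow_le_pow_right Nat.card_pos (Submodule.finrank_lt hp)

theorem Matrix.ker_mulVecLin_ne_top {m n R : Type*} [Fintype n] [CommRing R]
    {A : Matrix m n R} (hA : A ≠ 0) : LinearMap.ker A.mulVecLin ≠ ⊤ := by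
  classical
  rwa [Ne, LinearMap.ker_eq_top, ← Matrix.toLin'_apply', LinearEquiv.map_eq_zero_iff]

theorem Matrix.mulVec_mulVec_eq_iff_mem_ker {l m n R : Type*} [Fintype m] [Fintype n]
    [CommRing R] (A : Matrix l m R) (B : Matrix m n R) (C : Matrix l n R) (v : n → R) :
    A.mulVec (B.mulVec v) = C.mulVec v ↔ v ∈ LinearMap.ker (A * B - C).mulVecLin := by
  rw [LinearMap.mem_ker, Matrix.mulVecLin_apply, Matrix.sub_mulVec, Matrix.mulVec_mulVec,
    sub_eq_zero]

/-- Freivalds' check: if `X1 * X2 ≠ X3` over `F_q` and `ν ∈ F_q^l` is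
drawn uniformly at random, then `X1 ⬝ (X2 ⬝ ν) = X3 ⬝ ν` holds with probability at
most `1 / q`. -/
theorem freivalds_missed_detection_bound
    (q r s l : ℕ) (F : Type*) [Field F] [Fintype F] [DecidableEq F]
    (hq : Fintype.card F = q)
    (X1 : Matrix (Fin r) (Fin s) F) (X2 : Matrix (Fin s) (Fin l) F)
    (X3 : Matrix (Fin r) (Fin l) F) (h : X1 * X2 ≠ X3) :
    ((Finset.univ.filter (fun ν : Fin l → F =>
        X1.mulVec (X2.mulVec ν) = X3.mulVec ν)).card : ℝ)
      / (Fintype.card (Fin l → F) : ℝ) ≤ 1 / (q : ℝ) := by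
  set ker := LinearMap.ker (X1 * X2 - X3).mulVecLin
  have hcard : (Finset.univ.filter (fun ν : Fin l → F =>
      X1.mulVec (X2.mulVec ν) = X3.mulVec ν)).card = Nat.card ker := by
    rw [← Fintype.card_subtype, ← Nat.card_eq_fintype_card]
    exact Nat.card_congr (Equiv.subtypeEquivRight fun ν =>
      Matrix.mulVec_mulVec_eq_iff_mem_ker X1 X2 X3 ν)
  have hbound : Nat.card ker * q ≤ Fintype.card (Fin l → F) := by
    rw [← hq, ← Nat.card_eq_fintype_card, ← Nat.card_eq_fintype_card]
    exact Submodule.natCard_mul_natCard_le_of_ne_top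
      (Matrix.ker_mulVecLin_ne_top (sub_ne_zero.mpr h))
  have hq_pos : (0 : ℝ) < q := by rw [← hq]; exact_mod_cast Fintype.card_pos
  rw [hcard, div_le_div_iff₀ (by positivity) hq_pos, one_mul]
  exact_mod_cast hbound
end

section
/- Let q be a prime power and let F(x) ∈ F_q[x]^{r×s}, G(x) ∈ F_q[x]^{s×l}, H(x) ∈ F_q[x]^{r×l} be matrices of polynomials over F_q with H(x) ≠ F(x)·G(x), and let D be a natural number such that every entry of H(x) and every entry of F(x)·G(x) has degree at most D, with D ≤ q. If γ is drawn uniformly at random from all of F_q and, independently, ν is drawn uniformly at random from F_q^l, then the probability that H(γ)·ν = F(γ)·G(γ)·ν is at most D/q + 1/q − (D/q)·(1/q). -/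
/-!
The check fails to detect `H ≠ F G` only if `E = H - F G` satisfies `E(γ) ν = 0`.
A nonzero entry of `E` has at most `D` roots, so `E(γ) = 0` for at most `D` of the `q` values
of `γ`; for every other `γ` the kernel of the nonzero matrix `E(γ)` is a proper subspace of
`F_q^l`, hence contains at most a `1/q` fraction of the vectors `ν`. Altogether the
probability is at most `D/q + (1 - D/q)/q`.
-/

/-- Entrywise evaluation of a matrix of polynomials at a point. -/
def Matrix.evalPoly {m n F : Type*} [Semiring F]
    (P : Matrix m n (Polynomial F)) (γ : F) : Matrix m n F :=
  Matrix.of fun i j => (P i j).eval γ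

open Finset Polynomial Matrix

namespace Matrix

variable {m n o R K : Type*}

theorem evalPoly_eq_map [CommSemiring R] (P : Matrix m n R[X]) (γ : R) :
    P.evalPoly γ = P.map (evalRingHom γ) :=
  rfl

theorem evalPoly_mul [CommSemiring R] [Fintype n] (P : Matrix m n R[X]) (Q : Matrix n o R[X])
    (γ : R) : (P * Q).evalPoly γ = P.evalPoly γ * Q.evalPoly γ := by
  simp only [evalPoly_eq_map, Matrix.map_mul]

theorem evalPoly_sub [CommRing R] (P Q : Matrix m n R[X]) (γ : R) :
    (P - Q).evalPoly γ = P.evalPoly γ - Q.evalPoly γ := by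
  simp only [evalPoly_eq_map]
  exact Matrix.map_sub _ (map_sub _) P Q

theorem card_filter_evalPoly_eq_zero_le [CommRing R] [IsDomain R] [Fintype R] [DecidableEq R]
    [Fintype m] [Fintype n] {D : ℕ} (E : Matrix m n R[X]) (hE : E ≠ 0)
    (hdeg : ∀ i j, (E i j).natDegree ≤ D) : #{γ | E.evalPoly γ = 0} ≤ D := by
  obtain ⟨i, j, hij⟩ : ∃ i j, E i j ≠ 0 := by
    by_contra! h
    exact hE (ext h)
  refine (card_le_degree_of_subset_roots fun γ hγ => ?_).trans (hdeg i j)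
  rw [mem_roots hij, IsRoot.def]
  simpa [evalPoly] using congrFun₂ (mem_filter.mp hγ).2 i j

theorem card_mul_card_filter_mulVec_eq_zero_le [Field K] [Fintype K] [DecidableEq K]
    [Fintype m] [Fintype n] [DecidableEq n] (A : Matrix m n K) (hA : A ≠ 0) :
    Fintype.card K * #{v | A *ᵥ v = 0} ≤ Fintype.card K ^ Fintype.card n := by
  have hcard : #{v | A *ᵥ v = 0} = Nat.card (LinearMap.ker A.mulVecLin) := by
    rw [← Fintype.card_subtype, ← Nat.card_eq_fintype_card]
    rfl
  have hker : LinearMap.ker A.mulVecLin ≠ ⊤ := by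
    rwa [Ne, LinearMap.ker_eq_top, ← toLin'_apply', map_eq_zero_iff _ toLin'.injective]
  have hrank : Module.finrank K (LinearMap.ker A.mulVecLin) < Fintype.card n := by
    simpa using Submodule.finrank_lt hker
  rw [hcard, Module.natCard_eq_pow_finrank (K := K), Nat.card_eq_fintype_card, ← pow_succ']
  exact Nat.pow_le_pow_right Fintype.card_pos hrank

theorem card_mul_card_filter_prod_mulVec_eq_zero_le [Field K] [Fintype K] [DecidableEq K]
    [Fintype m] [Fintype n] [DecidableEq n] {ι : Type*} [Fintype ι] (A : ι → Matrix m n K) :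
    Fintype.card K * #{p : ι × (n → K) | A p.1 *ᵥ p.2 = 0}
      ≤ Fintype.card K ^ Fintype.card n
          * (Fintype.card ι + #{i | A i = 0} * (Fintype.card K - 1)) := by
  set q := Fintype.card K
  have hfiber : ∀ i,
      q * #{v | A i *ᵥ v = 0} ≤ q ^ Fintype.card n * (1 + if A i = 0 then q - 1 else 0) := by
    intro i
    split_ifs with h
    · have hq : 1 ≤ q := Fintype.card_pos
      simp [h, q, Nat.add_sub_cancel' hq, mul_comm]
    · simpa using card_mul_card_filter_mulVec_eq_zero_le (A i) h
  calc q * #{p : ι × (n → K) | A p.1 *ᵥ p.2 = 0}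
      = ∑ i, q * #{v | A i *ᵥ v = 0} := by
        simp only [card_filter, Fintype.sum_prod_type, mul_sum]
    _ ≤ ∑ i, q ^ Fintype.card n * (1 + if A i = 0 then q - 1 else 0) :=
        sum_le_sum fun i _ => hfiber i
    _ = _ := by
        rw [← mul_sum, sum_add_distrib, sum_ite, sum_const_zero, sum_const, add_zero]
        simp

end Matrix

theorem srpm3_modified_check_missed_detection_bound_general
    (q r s l D : ℕ) (F : Type*) [Field F] [Fintype F] [DecidableEq F]
    (hq : Fintype.card F = q)
    (Fp : Matrix (Fin r) (Fin s) (Polynomial F))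
    (Gp : Matrix (Fin s) (Fin l) (Polynomial F))
    (Hp : Matrix (Fin r) (Fin l) (Polynomial F))
    (hne : Hp ≠ Fp * Gp)
    (hdegH : ∀ i j, (Hp i j).natDegree ≤ D)
    (hdegFG : ∀ i j, ((Fp * Gp) i j).natDegree ≤ D) :
    ((((Finset.univ : Finset F) ×ˢ (Finset.univ : Finset (Fin l → F))).filter
        (fun p => (Hp.evalPoly p.1).mulVec p.2 =
          ((Fp.evalPoly p.1) * (Gp.evalPoly p.1)).mulVec p.2)).card : ℝ)
      / ((((Finset.univ : Finset F) ×ˢ (Finset.univ : Finset (Fin l → F))).card : ℝ))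
      ≤ (D : ℝ) / (q : ℝ) + 1 / (q : ℝ) - ((D : ℝ) / (q : ℝ)) * (1 / (q : ℝ)) := by
  set E := Hp - Fp * Gp
  have hcheck : ∀ γ (ν : Fin l → F),
      Hp.evalPoly γ *ᵥ ν = (Fp.evalPoly γ * Gp.evalPoly γ) *ᵥ ν ↔ E.evalPoly γ *ᵥ ν = 0 := by
    intro γ ν
    rw [evalPoly_sub, evalPoly_mul, sub_mulVec, sub_eq_zero]
  have hroots : #{γ | E.evalPoly γ = 0} ≤ D :=
    E.card_filter_evalPoly_eq_zero_le (sub_ne_zero.mpr hne) fun i j =>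
      (natDegree_sub_le _ _).trans (max_le (hdegH i j) (hdegFG i j))
  have hcount := card_mul_card_filter_prod_mulVec_eq_zero_le E.evalPoly
  rw [filter_congr fun (p : F × (Fin l → F)) _ => hcheck p.1 p.2, univ_product_univ]
  simp only [card_univ, Fintype.card_prod, Fintype.card_fun, Fintype.card_fin, hq] at hcount ⊢
  have hq0 : 0 < q := hq ▸ Fintype.card_pos
  have hbound : (q : ℝ) * #{p : F × (Fin l → F) | E.evalPoly p.1 *ᵥ p.2 = 0}
      ≤ q ^ l * (q + D * (q - 1)) := by
    have hnat : q * _ ≤ q ^ l * (q + D * (q - 1)) := hcount.trans (by gcongr)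
    have hreal := (Nat.cast_le (α := ℝ)).mpr hnat
    push_cast [Nat.cast_sub hq0] at hreal
    exact hreal
  have hrhs : ((D : ℝ) / q + 1 / q - D / q * (1 / q)) * ↑(q * q ^ l)
      = q ^ l * (q + D * (q - 1)) / q := by
    field_simp
    push_cast
    ring
  rw [div_le_iff₀ (by positivity), hrhs, le_div_iff₀ (by positivity), mul_comm]
  exact hbound

/-- Missed-detection bound for the modified security check: with
`H(x) ≠ F(x) * G(x)`, all entries of `H(x)` and `F(x) * G(x)` of degree at most `D`,
`D ≤ q`, a uniformly random `γ ∈ F_q` together with an independent uniformly random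
`ν ∈ F_q^l` satisfies `H(γ) ν = F(γ) G(γ) ν` with probability at most
`D/q + 1/q - (D/q) * (1/q)`. -/
theorem srpm3_modified_check_missed_detection_bound
    (q r s l D : ℕ) (F : Type*) [Field F] [Fintype F] [DecidableEq F]
    (hq : Fintype.card F = q)
    (Fp : Matrix (Fin r) (Fin s) (Polynomial F))
    (Gp : Matrix (Fin s) (Fin l) (Polynomial F))
    (Hp : Matrix (Fin r) (Fin l) (Polynomial F))
    (hne : Hp ≠ Fp * Gp)
    (hdegH : ∀ i j, (Hp i j).natDegree ≤ D)
    (hdegFG : ∀ i j, ((Fp * Gp) i j).natDegree ≤ D)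
    (hD : D ≤ q) :
    ((((Finset.univ : Finset F) ×ˢ (Finset.univ : Finset (Fin l → F))).filter
        (fun p => (Hp.evalPoly p.1).mulVec p.2 =
          ((Fp.evalPoly p.1) * (Gp.evalPoly p.1)).mulVec p.2)).card : ℝ)
      / ((((Finset.univ : Finset F) ×ˢ (Finset.univ : Finset (Fin l → F))).card : ℝ))
      ≤ (D : ℝ) / (q : ℝ) + 1 / (q : ℝ) - ((D : ℝ) / (q : ℝ)) * (1 / (q : ℝ)) :=
  srpm3_modified_check_missed_detection_bound_general q r s l D F hq Fp Gp Hp hne hdegH hdegFG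
end

section
/- Let F be a field, let z, d ≥ 1, let α_1, …, α_{z+d} be distinct elements of F, and let l_i(x) = ∏_{k ∈ [z+d], k ≠ i} (x − α_k)/(α_i − α_k) for i ∈ [z+d] be the associated Lagrange basis polynomials. Let β_1, …, β_z be distinct elements of F, none of which equals any α_k. Then the z×z matrix M over F with entries M_{j,i} = l_i(β_j) for i, j ∈ [z] is invertible. -/
/-!
A vector `w` in the kernel of `M` gives the polynomial `p = ∑ᵢ wᵢ lᵢ` (sum over `i ∈ [z]`), of
degree `< z + d`. It vanishes at the `d` nodes `α_{z+1}, …, α_{z+d}` because every `lᵢ` does, and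
at the `z` points `β_j` because `M w = 0`. These `z + d` points are distinct, so `p = 0`, and
evaluating at `αᵢ` gives `wᵢ = p(αᵢ) = 0`.
-/

open Polynomial Finset Function

namespace Lagrange

variable {F ι κ : Type*} [Field F] [Fintype ι] [DecidableEq ι] [Fintype κ]

theorem eq_zero_of_eval_interpolate_eq_zero {v : ι → F} (hv : Injective v) (e : κ ↪ ι)
    {β : κ → F} (hβ : Injective β) (hβv : ∀ j k, β j ≠ v k) {r : ι → F}
    (hr : ∀ k ∉ Set.range e, r k = 0) (hβr : ∀ j, (interpolate univ v r).eval (β j) = 0) :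
    r = 0 := by
  set p := interpolate univ v r
  let offRange : Finset ι := (univ.map e)ᶜ
  have hoffRange : ∀ k : offRange, k.1 ∉ Set.range e := by
    rintro ⟨k, hk⟩ ⟨j, rfl⟩
    simp [offRange] at hk
  let roots : κ ⊕ offRange → F := Sum.elim β (v ∘ Subtype.val)
  have hroots : ∀ x, p.eval (roots x) = 0 := by
    rintro (j | k)
    · exact hβr j
    · exact (eval_interpolate_at_node r hv.injOn (mem_univ k.1)).trans (hr k (hoffRange k))
  have hinj : Injective roots :=
    hβ.sumElim (hv.comp Subtype.val_injective) fun j k => hβv j k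
  have hcard : Fintype.card (κ ⊕ offRange) = Fintype.card ι := by
    simp only [Fintype.card_sum, Fintype.card_coe, offRange, card_compl, card_map, card_univ]
    have := Fintype.card_le_of_embedding e
    omega
  have hp : p = 0 := by
    refine eq_zero_of_degree_lt_of_eval_finset_eq_zero (s := univ.map ⟨roots, hinj⟩) ?_ ?_
    · rw [card_map, card_univ, hcard, ← card_univ]
      exact degree_interpolate_lt r hv.injOn
    · simpa only [mem_map, mem_univ, true_and, Embedding.coeFn_mk, forall_exists_index,
        forall_apply_eq_imp_iff] using hroots
  funext k
  simpa [p, hp] using (eval_interpolate_at_node r hv.injOn (mem_univ k)).symm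

theorem isUnit_of_eval_basis [DecidableEq κ] {v : ι → F} (hv : Injective v) (e : κ ↪ ι)
    {β : κ → F} (hβ : Injective β) (hβv : ∀ j k, β j ≠ v k) :
    IsUnit (Matrix.of fun j i => (Lagrange.basis univ v (e i)).eval (β j)) := by
  rw [← Matrix.mulVec_injective_iff_isUnit]
  refine (injective_iff_map_eq_zero (Matrix.mulVecLin _)).mpr fun w hw => ?_
  set r : ι → F := extend e w 0
  have hsum : interpolate univ v r = ∑ i, C (w i) * Lagrange.basis univ v (e i) := by
    refine (Fintype.sum_of_injective e e.injective _ _ (fun k hk => ?_) fun i => ?_).symm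
    · simp [r, extend_apply' _ _ _ hk]
    · simp [r, e.injective.extend_apply]
  have hr : r = 0 := by
    refine eq_zero_of_eval_interpolate_eq_zero hv e hβ hβv (fun k hk => extend_apply' _ _ _ hk)
      fun j => ?_
    simpa [hsum, eval_finsetSum, Matrix.mulVec, dotProduct, mul_comm] using congrFun hw j
  funext i
  simpa [r, e.injective.extend_apply] using congrFun hr (e i)

end Lagrange

theorem srpm3_lagrange_mask_matrix_invertible_general
    (F : Type*) [Field F] (z d : ℕ)
    (α : Fin (z + d) → F) (hα : Function.Injective α)
    (lp : Fin (z + d) → Polynomial F)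
    (hlp : ∀ i, lp i = ∏ k ∈ Finset.univ.erase i,
        Polynomial.C (α i - α k)⁻¹ * (Polynomial.X - Polynomial.C (α k)))
    (β : Fin z → F) (hβ : Function.Injective β)
    (hβα : ∀ j k, β j ≠ α k)
    (M : Matrix (Fin z) (Fin z) F)
    (hM : ∀ j i, M j i = (lp (Fin.castAdd d i)).eval (β j)) :
    IsUnit M := by
  obtain rfl : M = Matrix.of fun j i => (Lagrange.basis univ α (Fin.castAddEmb d i)).eval (β j) :=
    Matrix.ext fun j i => by rw [hM, hlp]; rfl
  exact Lagrange.isUnit_of_eval_basis hα (Fin.castAddEmb d) hβ hβα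

/-- Key algebraic step of SRPM3's privacy proof: for distinct points
`α_1, …, α_{z+d}` with Lagrange basis polynomials `l_i`, and distinct points
`β_1, …, β_z` avoiding all `α_k`, the `z × z` matrix `M` with `M_{j,i} = l_i(β_j)`
(for `i, j ∈ [z]`) is invertible. -/
theorem srpm3_lagrange_mask_matrix_invertible
    (F : Type*) [Field F] (z d : ℕ) (hz : 1 ≤ z) (hd : 1 ≤ d)
    (α : Fin (z + d) → F) (hα : Function.Injective α)
    (lp : Fin (z + d) → Polynomial F)
    (hlp : ∀ i, lp i = ∏ k ∈ Finset.univ.erase i,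
        Polynomial.C (α i - α k)⁻¹ * (Polynomial.X - Polynomial.C (α k)))
    (β : Fin z → F) (hβ : Function.Injective β)
    (hβα : ∀ j k, β j ≠ α k)
    (M : Matrix (Fin z) (Fin z) F)
    (hM : ∀ j i, M j i = (lp (Fin.castAdd d i)).eval (β j)) :
    IsUnit M :=
  srpm3_lagrange_mask_matrix_invertible_general F z d α hα lp hlp β hβ hβα M hM
end

section
/- Let q ≥ 2 and D be natural numbers with 2D + 1 ≤ q, let S be a finite set with q − D − 1 ≤ |S| ≤ q, let R ⊆ S with |R| ≤ D, and let 1 ≤ η ≤ q − D − 1. Then Σ_{j=0}^{η} [ C(|R|, j) · C(|S| − |R|, η − j) / C(|S|, η) ] · (1/q)^(η − j) ≤ Σ_{j=0}^{η} [ C(D, j) · C(q − 2D − 1, η − j) / C(q − D − 1, η) ] · (1/q)^(η − j), where C(n, k) denotes the binomial coefficient. -/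
/-!
`∑ⱼ C(K, j) C(N - K, n - j) f(j) / C(N, n)` is the mean of `f(J)` for `J` hypergeometric: the
number of marked points among `n` drawn without replacement from `N` points, `K` of them marked.
For monotone `f` this mean increases with `K` (Pascal's rule on both factors turns one more marked
point into a termwise comparison of `f(j)` with `f(j + 1)`) and decreases with `N`: by Pascal's
rule in `N` the mean for `N + 1` is a mediant of the means for `N` with `n` and `n - 1` draws,
and the mean increases with `n` because it is symmetric in `K` and `n`. The left-hand side is
such a mean with `(N, K) = (|S|, |R|)` and the right-hand side one with `(q - D - 1, D)`, for
`f(j) = q^{-(η - j)}`.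
-/

open Finset

theorem Nat.choose_mul_choose_sub_comm (M a b : ℕ) :
    M.choose a * (M - a).choose b = M.choose b * (M - b).choose a := by
  have ha := Nat.choose_mul (n := M) (Nat.le_add_right a b)
  have hb := Nat.choose_mul (n := M) (Nat.le_add_left b a)
  rw [Nat.add_sub_cancel_left] at ha
  rw [Nat.add_sub_cancel] at hb
  rw [← ha, ← hb, Nat.choose_symm_add]

theorem Nat.choose_mul_choose_mul_choose_sub_comm {N K n j : ℕ} (hjK : j ≤ K) (hjn : j ≤ n) :
    N.choose K * (K.choose j * (N - K).choose (n - j))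
      = N.choose n * (n.choose j * (N - n).choose (K - j)) := by
  have hK := Nat.choose_mul (n := N) hjK
  have hn := Nat.choose_mul (n := N) hjn
  have hswap := Nat.choose_mul_choose_sub_comm (N - j) (K - j) (n - j)
  rw [Nat.sub_sub_sub_cancel_right hjK, Nat.sub_sub_sub_cancel_right hjn] at hswap
  calc N.choose K * (K.choose j * (N - K).choose (n - j))
      = N.choose j * ((N - j).choose (K - j) * (N - K).choose (n - j)) := by
        rw [← mul_assoc, hK, mul_assoc]
    _ = N.choose n * (n.choose j * (N - n).choose (K - j)) := by
        rw [hswap, ← mul_assoc, ← hn, mul_assoc]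

section CommSemiring

variable {R : Type*} [CommSemiring R]

def hypergeomSum (f : ℕ → R) (N K n : ℕ) : R :=
  ∑ j ∈ range (n + 1), (K.choose j * (N - K).choose (n - j) : R) * f j

@[simp]
theorem hypergeomSum_zero (f : ℕ → R) (N K : ℕ) : hypergeomSum f N K 0 = f 0 := by
  simp [hypergeomSum]

theorem hypergeomSum_succ_succ (f : ℕ → R) {N K : ℕ} (hK : K ≤ N) (n : ℕ) :
    hypergeomSum f (N + 1) K (n + 1) = hypergeomSum f N K (n + 1) + hypergeomSum f N K n := by
  have hM : N + 1 - K = N - K + 1 := by omega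
  simp only [hypergeomSum, hM]
  rw [sum_range_succ _ (n + 1), sum_range_succ _ (n + 1), Nat.sub_self, Nat.choose_zero_right,
    Nat.choose_zero_right, add_right_comm, ← sum_add_distrib]
  congr 1
  refine sum_congr rfl fun j hj ↦ ?_
  rw [Nat.sub_add_comm (mem_range_succ_iff.1 hj), Nat.choose_succ_succ']
  push_cast
  ring

theorem hypergeomSum_succ_succ_succ (f : ℕ → R) (N K n : ℕ) :
    hypergeomSum f (N + 1) (K + 1) (n + 1)
      = hypergeomSum f N K (n + 1) + hypergeomSum (fun j ↦ f (j + 1)) N K n := by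
  simp only [hypergeomSum, Nat.add_sub_add_right]
  rw [sum_range_succ' _ (n + 1), sum_range_succ' _ (n + 1), Nat.choose_zero_right,
    Nat.choose_zero_right, add_right_comm, ← sum_add_distrib]
  congr 1
  refine sum_congr rfl fun j _ ↦ ?_
  rw [Nat.choose_succ_succ']
  push_cast
  ring

theorem hypergeomSum_eq_sum_range_min (f : ℕ → R) (N K n : ℕ) :
    hypergeomSum f N K n
      = ∑ j ∈ range (min n K + 1), (K.choose j * (N - K).choose (n - j) : R) * f j := by
  refine (sum_subset (range_subset_range.2 (by omega)) fun j hj hjK ↦ ?_).symm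
  rw [mem_range] at hj hjK
  rw [Nat.choose_eq_zero_of_lt (by omega : K < j)]
  simp

theorem choose_mul_hypergeomSum_comm (f : ℕ → R) (N K n : ℕ) :
    N.choose K * hypergeomSum f N K n = N.choose n * hypergeomSum f N n K := by
  rw [hypergeomSum_eq_sum_range_min, hypergeomSum_eq_sum_range_min, min_comm, mul_sum, mul_sum]
  refine sum_congr rfl fun j hj ↦ ?_
  obtain ⟨hjK, hjn⟩ := le_min_iff.1 (mem_range_succ_iff.1 hj)
  have h := congrArg (Nat.cast (R := R))
    (Nat.choose_mul_choose_mul_choose_sub_comm (N := N) hjK hjn)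
  push_cast at h
  rw [← mul_assoc, h, mul_assoc]

variable [PartialOrder R] [IsOrderedRing R] {f : ℕ → R}

theorem hypergeomSum_mono {g : ℕ → R} (h : ∀ j, f j ≤ g j) (N K n : ℕ) :
    hypergeomSum f N K n ≤ hypergeomSum g N K n :=
  sum_le_sum fun j _ ↦ mul_le_mul_of_nonneg_left (h j) (by positivity)

theorem hypergeomSum_le_succ_successes (hf : Monotone f) {N K : ℕ} (hK : K < N) (n : ℕ) :
    hypergeomSum f N K n ≤ hypergeomSum f N (K + 1) n := by
  obtain ⟨N, rfl⟩ : ∃ M, N = M + 1 := ⟨N - 1, by omega⟩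
  cases n with
  | zero => simp
  | succ n =>
    rw [hypergeomSum_succ_succ f (Nat.lt_succ_iff.1 hK), hypergeomSum_succ_succ_succ]
    exact add_le_add le_rfl (hypergeomSum_mono (fun j ↦ hf j.le_succ) N K n)

theorem hypergeomSum_mono_successes (hf : Monotone f) {N K K' : ℕ} (hKK' : K ≤ K')
    (hK' : K' ≤ N) (n : ℕ) : hypergeomSum f N K n ≤ hypergeomSum f N K' n := by
  induction K', hKK' using Nat.le_induction with
  | base => exact le_rfl
  | succ K' hKK' ih =>
    exact (ih (by omega)).trans (hypergeomSum_le_succ_successes hf (by omega) n)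

end CommSemiring

theorem add_div_add_le_div_of_div_le_div {𝕜 : Type*} [Field 𝕜] [LinearOrder 𝕜]
    [IsStrictOrderedRing 𝕜] {a b c d : 𝕜} (hc : 0 < c) (hd : 0 < d) (h : b / d ≤ a / c) :
    (a + b) / (c + d) ≤ a / c := by
  rw [div_le_div_iff₀ hd hc] at h
  rw [div_le_div_iff₀ (add_pos hc hd) hc]
  linear_combination h

section Field

variable {𝕜 : Type*} [Field 𝕜]

def hypergeomMean (f : ℕ → 𝕜) (N K n : ℕ) : 𝕜 :=
  hypergeomSum f N K n / N.choose n

variable [LinearOrder 𝕜] [IsStrictOrderedRing 𝕜] {f : ℕ → 𝕜}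

theorem hypergeomMean_comm {N K n : ℕ} (hK : K ≤ N) (hn : n ≤ N) :
    hypergeomMean f N K n = hypergeomMean f N n K := by
  have hK' : (N.choose K : 𝕜) ≠ 0 := Nat.cast_ne_zero.2 (Nat.choose_pos hK).ne'
  have hn' : (N.choose n : 𝕜) ≠ 0 := Nat.cast_ne_zero.2 (Nat.choose_pos hn).ne'
  rw [hypergeomMean, hypergeomMean, div_eq_div_iff hn' hK', mul_comm,
    choose_mul_hypergeomSum_comm, mul_comm]

theorem hypergeomMean_mono_successes (hf : Monotone f) {N K K' : ℕ} (hKK' : K ≤ K')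
    (hK' : K' ≤ N) (n : ℕ) : hypergeomMean f N K n ≤ hypergeomMean f N K' n :=
  div_le_div_of_nonneg_right (hypergeomSum_mono_successes hf hKK' hK' n) (Nat.cast_nonneg _)

theorem hypergeomMean_le_succ_draws (hf : Monotone f) {N K n : ℕ} (hK : K ≤ N) (hn : n < N) :
    hypergeomMean f N K n ≤ hypergeomMean f N K (n + 1) := by
  rw [hypergeomMean_comm hK hn.le, hypergeomMean_comm hK hn]
  exact div_le_div_of_nonneg_right (hypergeomSum_le_succ_successes hf hn K) (Nat.cast_nonneg _)

theorem hypergeomMean_succ_population_le (hf : Monotone f) {N K n : ℕ} (hK : K ≤ N)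
    (hn : n ≤ N) : hypergeomMean f (N + 1) K n ≤ hypergeomMean f N K n := by
  cases n with
  | zero => simp [hypergeomMean]
  | succ n =>
    have hpos : ∀ m ≤ N, (0 : 𝕜) < N.choose m := fun m hm ↦ Nat.cast_pos.2 (Nat.choose_pos hm)
    rw [hypergeomMean, hypergeomSum_succ_succ f hK, Nat.choose_succ_succ', Nat.cast_add,
      add_comm (N.choose n : 𝕜)]
    exact add_div_add_le_div_of_div_le_div (hpos _ hn) (hpos n (by omega))
      (hypergeomMean_le_succ_draws hf hK hn)

theorem hypergeomMean_antitone_population (hf : Monotone f) {N₀ N K n : ℕ} (hK : K ≤ N₀)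
    (hn : n ≤ N₀) (hN : N₀ ≤ N) : hypergeomMean f N K n ≤ hypergeomMean f N₀ K n := by
  induction N, hN using Nat.le_induction with
  | base => exact le_rfl
  | succ N hN ih =>
    exact (hypergeomMean_succ_population_le hf (hK.trans hN) (hn.trans hN)).trans ih

end Field

theorem repeated_check_bound_monotone_general
    {α : Type*} (q D : ℕ) (hD : 2 * D + 1 ≤ q)
    (S R : Finset α) (hR : R.card ≤ D)
    (hS1 : q - D - 1 ≤ S.card)
    (η : ℕ) (hη2 : η ≤ q - D - 1) :
    ∑ j ∈ Finset.range (η + 1),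
        ((R.card.choose j : ℝ) * (((S.card - R.card).choose (η - j) : ℕ) : ℝ)
            / ((S.card.choose η : ℕ) : ℝ))
          * ((1 : ℝ) / (q : ℝ)) ^ (η - j)
    ≤ ∑ j ∈ Finset.range (η + 1),
        ((D.choose j : ℝ) * (((q - 2 * D - 1).choose (η - j) : ℕ) : ℝ)
            / (((q - D - 1).choose η : ℕ) : ℝ))
          * ((1 : ℝ) / (q : ℝ)) ^ (η - j) := by
  set f : ℕ → ℝ := fun j ↦ (1 / (q : ℝ)) ^ (η - j)
  have hf : Monotone f := fun i j hij ↦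
    pow_le_pow_of_le_one (by positivity) (by rw [one_div]; exact Nat.cast_inv_le_one q)
      (by omega)
  have hmean : ∀ N K : ℕ, ∑ j ∈ range (η + 1),
      ((K.choose j : ℝ) * (((N - K).choose (η - j) : ℕ) : ℝ) / ((N.choose η : ℕ) : ℝ)) * f j
        = hypergeomMean f N K η := fun N K ↦ by
    rw [hypergeomMean, hypergeomSum, sum_div]
    exact sum_congr rfl fun j _ ↦ div_mul_eq_mul_div _ _ _
  rw [show q - 2 * D - 1 = q - D - 1 - D by omega, hmean, hmean]
  calc hypergeomMean f S.card R.card η ≤ hypergeomMean f S.card D η :=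
        hypergeomMean_mono_successes hf hR (by omega) η
    _ ≤ hypergeomMean f (q - D - 1) D η :=
        hypergeomMean_antitone_population hf (by omega) hη2 hS1

/-- Monotonicity of the hypergeometric missed-detection bound: with
`q ≥ 2`, `2D + 1 ≤ q`, `q - D - 1 ≤ |S| ≤ q`, `R ⊆ S`, `|R| ≤ D`, and
`1 ≤ η ≤ q - D - 1`, the hypergeometric sum with parameters `(|R|, |S|)` is at most
the one with parameters `(D, q - D - 1)`. -/
theorem repeated_check_bound_monotone
    {α : Type*} [DecidableEq α] (q D : ℕ) (hq : 2 ≤ q) (hD : 2 * D + 1 ≤ q)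
    (S R : Finset α) (hRS : R ⊆ S) (hR : R.card ≤ D)
    (hS1 : q - D - 1 ≤ S.card) (hS2 : S.card ≤ q)
    (η : ℕ) (hη1 : 1 ≤ η) (hη2 : η ≤ q - D - 1) :
    ∑ j ∈ Finset.range (η + 1),
        ((R.card.choose j : ℝ) * (((S.card - R.card).choose (η - j) : ℕ) : ℝ)
            / ((S.card.choose η : ℕ) : ℝ))
          * ((1 : ℝ) / (q : ℝ)) ^ (η - j)
    ≤ ∑ j ∈ Finset.range (η + 1),
        ((D.choose j : ℝ) * (((q - 2 * D - 1).choose (η - j) : ℕ) : ℝ)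
            / (((q - D - 1).choose η : ℕ) : ℝ))
          * ((1 : ℝ) / (q : ℝ)) ^ (η - j) :=
  repeated_check_bound_monotone_general q D hD S R hR hS1 η hη2
end
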